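/- arXiv:1502.04188 — 4 statements merged into one kernel-verified Lean document; each statement's English description precedes it below -/
import Mathlib

section
/- Let n ≥ 1. There exists a real number α₀ ≥ 1, depending only on n, such that for every real α > α₀ the following holds: for every strictly increasing sequence of integers p₁ < p₂ < ⋯ < pₙ, the vector (α^{p₁}, α^{p₂}, …, α^{pₙ}) ∈ ℝⁿ does not belong to the ℝ-linear span of any subset T of Q̃^{BCD} with card T ≤ n − 1. -/
/-- The set `Q̃^{BCD} ⊆ ℝⁿ`: all `±e_j` and all `±e_i ± e_j` for `i < j`. -/
def QBCD (n : ℕ) : Set (Fin n → ℝ) :=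
  {v | (∃ j : Fin n, v = Pi.single j (1 : ℝ) ∨ v = -Pi.single j (1 : ℝ)) ∨
    ∃ i j : Fin n, i < j ∧
      (v = Pi.single i (1 : ℝ) + Pi.single j (1 : ℝ) ∨
       v = Pi.single i (1 : ℝ) - Pi.single j (1 : ℝ) ∨
       v = -Pi.single i (1 : ℝ) + Pi.single j (1 : ℝ) ∨
       v = -Pi.single i (1 : ℝ) - Pi.single j (1 : ℝ))}

/-!
Every vector of `Q̃^{BCD}` has at most two nonzero entries, each `±1`, so `T` is the edge set of
a signed graph on `n` vertices with fewer edges than vertices. Double counting yields a vertex of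
degree at most one; removing it together with its edge and inducting produces a nonzero
functional `l` with entries in `{-1, 0, 1}` that vanishes on `T`. Paired with `(α^{p_i})`, the
term at the largest index in the support of `l` outweighs all the others once `α > n`, since the
exponents strictly increase; so `α₀ = n` works.
-/

open Finset

def IsSignedPair {ι : Type*} [DecidableEq ι] (t : ι → ℝ) : Prop :=
  ∃ (a b : ι) (x y : SignType), t = Pi.single a (x : ℝ) + Pi.single b (y : ℝ)

lemma isSignedPair_of_mem_QBCD {n : ℕ} {t : Fin n → ℝ} (ht : t ∈ QBCD n) :
    IsSignedPair t := by
  rcases ht with ⟨j, rfl | rfl⟩ | ⟨i, j, -, rfl | rfl | rfl | rfl⟩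
  · exact ⟨j, j, 1, 0, by simp⟩
  · exact ⟨j, j, -1, 0, by simp [Pi.single_neg]⟩
  · exact ⟨i, j, 1, 1, by simp⟩
  · exact ⟨i, j, 1, -1, by simp [sub_eq_add_neg, Pi.single_neg]⟩
  · exact ⟨i, j, -1, 1, by simp [Pi.single_neg]⟩
  · exact ⟨i, j, -1, -1, by simp [sub_eq_add_neg, Pi.single_neg]⟩

namespace IsSignedPair

variable {ι : Type*} [DecidableEq ι] {t : ι → ℝ}

lemma exists_eq_single_add_single (ht : IsSignedPair t) {j : ι} (hj : t j ≠ 0) :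
    ∃ (b : ι) (x y : SignType), t = Pi.single j (x : ℝ) + Pi.single b (y : ℝ) := by
  obtain ⟨a, b, x, y, rfl⟩ := ht
  by_cases ha : a = j
  · exact ⟨b, x, y, ha ▸ rfl⟩
  · obtain rfl : b = j := by
      by_contra hb
      simp [Pi.single_eq_of_ne' ha, Pi.single_eq_of_ne' hb] at hj
    exact ⟨a, y, x, add_comm _ _⟩

lemma card_filter_ne_zero_le_two (ht : IsSignedPair t) (S : Finset ι) :
    #{k ∈ S | t k ≠ 0} ≤ 2 := by
  obtain ⟨a, b, x, y, rfl⟩ := ht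
  calc #{k ∈ S | _} ≤ #{a, b} := card_le_card fun k hk => by
        by_contra hab
        simp only [mem_insert, mem_singleton, not_or] at hab
        simp [Pi.single_eq_of_ne hab.1, Pi.single_eq_of_ne hab.2] at hk
    _ ≤ 2 := card_le_two

lemma exists_update_dotProduct_eq_zero [Fintype ι] (ht : IsSignedPair t) {j : ι}
    (hj : t j ≠ 0) {l : ι → SignType} (hlj : l j = 0) :
    ∃ c : SignType, (fun i => (Function.update l j c i : ℝ)) ⬝ᵥ t = 0 := by
  obtain ⟨b, x, y, rfl⟩ := ht.exists_eq_single_add_single hj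
  -- `x * c + y * l b = 0` is solved by `c = -x * y * l b`, because `x = ±1` when `b ≠ j`.
  refine ⟨-(x * y * l b), ?_⟩
  rw [dotProduct_add, dotProduct_single, dotProduct_single, Function.update_self]
  rcases eq_or_ne b j with rfl | hbj
  · simp [hlj]
  · have hx : (x : ℝ) ≠ 0 := by simpa [Pi.single_eq_of_ne' hbj] using hj
    have hxx : (x : ℝ) * x = 1 := by cases x <;> simp at hx ⊢
    rw [Function.update_of_ne hbj]
    push_cast
    linear_combination (-(y : ℝ) * l b) * hxx

end IsSignedPair

section SignedGraph

variable {ι : Type*} [DecidableEq ι]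

lemma exists_mem_card_filter_ne_zero_le_one {T : Finset (ι → ℝ)}
    (hT : ∀ t ∈ T, IsSignedPair t) {S : Finset ι} (hTS : #T < #S) :
    ∃ j ∈ S, #{t ∈ T | t j ≠ 0} ≤ 1 := by
  by_contra! hdeg
  have := card_mul_le_card_mul (fun j (t : ι → ℝ) => t j ≠ 0) (m := 2) (n := 2)
    (fun j hj => hdeg j hj) fun t ht => (hT t ht).card_filter_ne_zero_le_two S
  omega

theorem exists_signType_dotProduct_eq_zero [Fintype ι] (T : Finset (ι → ℝ))
    (hT : ∀ t ∈ T, IsSignedPair t) (S : Finset ι) (hTS : #T < #S) :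
    ∃ l : ι → SignType, l ≠ 0 ∧ (∀ i ∉ S, l i = 0) ∧
      ∀ t ∈ T, (fun i => (l i : ℝ)) ⬝ᵥ t = 0 := by
  induction T using Finset.strongInduction generalizing S with
  | H T ih =>
  obtain ⟨j, hjS, hdeg⟩ := exists_mem_card_filter_ne_zero_le_one hT hTS
  by_cases hj : ∃ t₀ ∈ T, t₀ j ≠ 0
  swap
  · push Not at hj
    refine ⟨Pi.single j 1, fun h => by simpa using congr_fun h j, fun i hi => ?_,
      fun t ht => ?_⟩
    · exact Pi.single_eq_of_ne (ne_of_mem_of_not_mem hjS hi).symm _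
    · have hsingle : (fun i => ((Pi.single j 1 : ι → SignType) i : ℝ)) = Pi.single j 1 := by
        simpa using
          funext (Pi.apply_single (fun _ => SignType.cast) (fun _ => SignType.coe_zero) j 1)
      rw [hsingle, single_one_dotProduct, hj t ht]
  obtain ⟨t₀, ht₀T, ht₀j⟩ := hj
  have huniq : ∀ t ∈ T, t j ≠ 0 → t = t₀ := fun t ht htj =>
    card_le_one.mp hdeg t (by simp [ht, htj]) t₀ (by simp [ht₀T, ht₀j])
  obtain ⟨l', hl'0, hl'S, hl'T⟩ := ih (T.erase t₀) (erase_ssubset ht₀T)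
    (fun t ht => hT t (mem_of_mem_erase ht)) (S.erase j) (by
      have := card_pos.mpr ⟨t₀, ht₀T⟩
      rw [card_erase_of_mem ht₀T, card_erase_of_mem hjS]; omega)
  have hl'j : l' j = 0 := hl'S j (by simp)
  obtain ⟨c, hc⟩ := (hT t₀ ht₀T).exists_update_dotProduct_eq_zero ht₀j hl'j
  refine ⟨Function.update l' j c, ?_, fun i hi => ?_, fun t ht => ?_⟩
  · obtain ⟨i, hi⟩ := Function.ne_iff.mp hl'0
    have hij : i ≠ j := by rintro rfl; exact hi hl'j
    exact Function.ne_iff.mpr ⟨i, by simpa [Function.update_of_ne hij] using hi⟩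
  · have hij : i ≠ j := by rintro rfl; exact hi hjS
    rw [Function.update_of_ne hij]
    exact hl'S i (by simp [hi])
  · rcases eq_or_ne t t₀ with rfl | htt₀
    · exact hc
    have htj : t j = 0 := by_contra fun htj => htt₀ (huniq t ht htj)
    rw [← hl'T t (mem_erase.mpr ⟨htt₀, ht⟩)]
    refine sum_congr rfl fun i _ => ?_
    rcases eq_or_ne i j with rfl | hij
    · simp [htj]
    · simp [Function.update_of_ne hij]

end SignedGraph

lemma dotProduct_eq_zero_of_mem_span {ι R : Type*} [Fintype ι] [CommSemiring R]
    {l v : ι → R} {T : Set (ι → R)} (hT : ∀ t ∈ T, l ⬝ᵥ t = 0)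
    (hv : v ∈ Submodule.span R T) : l ⬝ᵥ v = 0 :=
  Submodule.span_le (p := LinearMap.ker (dotProductBilin R R l)).mpr hT hv

section Dominant

variable {ι : Type*} [Fintype ι] [LinearOrder ι] [LocallyFiniteOrderBot ι]
  {p : ι → ℤ} {α : ℝ}

theorem dotProduct_zpow_ne_zero_of_dominant {c : ι → ℝ} (hp : StrictMono p) (hα : 1 ≤ α)
    {j : ι} (hj : ∀ i, j < i → c i = 0) (hdom : ∑ i ∈ Iio j, |c i| < α * |c j|) :
    c ⬝ᵥ (fun i => α ^ p i) ≠ 0 := by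
  have hα0 : 0 < α := by linarith
  have hpos : 0 < α ^ (p j - 1) := zpow_pos hα0 _
  have hsplit :
      c ⬝ᵥ (fun i => α ^ p i) = c j * α ^ p j + ∑ i ∈ Iio j, c i * α ^ p i := by
    rw [dotProduct, ← sum_subset (subset_univ (Iic j)) fun i _ hi => by
      rw [hj i (not_le.mp (mem_Iic.not.mp hi)), zero_mul], ← Iio_insert,
      sum_insert notMem_Iio_self]
  have hlower : |∑ i ∈ Iio j, c i * α ^ p i| < |c j * α ^ p j| := calc
    _ ≤ ∑ i ∈ Iio j, |c i| * α ^ (p j - 1) := by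
        refine (abs_sum_le_sum_abs _ _).trans (sum_le_sum fun i hi => ?_)
        rw [abs_mul, abs_of_pos (zpow_pos hα0 _)]
        have := hp (mem_Iio.mp hi)
        exact mul_le_mul_of_nonneg_left (zpow_le_zpow_right₀ hα (by omega)) (abs_nonneg _)
    _ < α * |c j| * α ^ (p j - 1) := by rw [← sum_mul]; exact mul_lt_mul_of_pos_right hdom hpos
    _ = |c j * α ^ p j| := by
        rw [abs_mul, abs_of_pos (zpow_pos hα0 _), zpow_sub_one₀ hα0.ne']
        field_simp
  intro h
  rw [hsplit, add_eq_zero_iff_eq_neg] at h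
  rw [h, abs_neg] at hlower
  exact hlower.false

theorem signType_dotProduct_zpow_ne_zero {l : ι → SignType} (hl : l ≠ 0) (hp : StrictMono p)
    (hα : Fintype.card ι < α) : (fun i => (l i : ℝ)) ⬝ᵥ (fun i => α ^ p i) ≠ 0 := by
  have hsupp : (univ.filter fun i => l i ≠ 0).Nonempty := by
    obtain ⟨i, hi⟩ := Function.ne_iff.mp hl
    exact ⟨i, by simpa using hi⟩
  set j := (univ.filter fun i => l i ≠ 0).max' hsupp
  have hlj : l j ≠ 0 := by simpa using max'_mem _ hsupp
  have habs (s : SignType) : |(s : ℝ)| ≤ 1 := by cases s <;> simp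
  have hα1 : 1 ≤ α := by
    have : (1 : ℝ) ≤ Fintype.card ι := by exact_mod_cast Fintype.card_pos_iff.mpr ⟨j⟩
    linarith
  refine dotProduct_zpow_ne_zero_of_dominant hp hα1 (j := j) (fun i hji => ?_) ?_
  · suffices l i = 0 by simp [this]
    by_contra hi
    exact not_lt.mpr (le_max' (univ.filter fun i => l i ≠ 0) i (by simpa using hi)) hji
  · have hj1 : |(l j : ℝ)| = 1 := by cases h : l j <;> simp_all
    calc ∑ i ∈ Iio j, |(l i : ℝ)| ≤ #(Iio j) := by
          simpa using sum_le_sum fun i (_ : i ∈ Iio j) => habs (l i)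
      _ ≤ Fintype.card ι := by exact_mod_cast card_le_univ _
      _ < α * |(l j : ℝ)| := by rwa [hj1, mul_one]

end Dominant

/-- for all sufficiently large `α`, a vector
`(α^{p₁}, …, α^{pₙ})` with strictly increasing integer exponents lies in no
span of at most `n − 1` elements of `Q̃^{BCD}`. -/
theorem zpow_vector_not_mem_span_QBCD (n : ℕ) (hn : 1 ≤ n) :
    ∃ α₀ : ℝ, 1 ≤ α₀ ∧ ∀ α : ℝ, α₀ < α →
      ∀ p : Fin n → ℤ, StrictMono p →
        ∀ T : Finset (Fin n → ℝ), ↑T ⊆ QBCD n → T.card ≤ n - 1 →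
          (fun i : Fin n => α ^ (p i)) ∉ Submodule.span ℝ (T : Set (Fin n → ℝ)) := by
  refine ⟨n, by exact_mod_cast hn, fun α hα p hp T hTQ hTn hmem => ?_⟩
  obtain ⟨l, hl, -, hlT⟩ := exists_signType_dotProduct_eq_zero T
    (fun t ht => isSignedPair_of_mem_QBCD (hTQ ht)) univ
    (by rw [card_univ, Fintype.card_fin]; omega)
  exact signType_dotProduct_zpow_ne_zero hl hp (by simpa using hα)
    (dotProduct_eq_zero_of_mem_span hlT hmem)
end

section
/- Let n ≥ 1. There exists a real number α₀ ≥ 1 such that for every real α > α₀ the following holds: if Q₁, …, Qₙ are pairwise distinct elements of Q̃^{BCD} and the family (Q₁, …, Qₙ) is η_α-oriented, then for every subset S ⊆ {1, …, n} the number of indices k with supp(Q_k) ⊆ S is at most card S. (Equivalently: in the multigraph on vertex set {1, …, n} that has a loop at j for each Q_k of the form ±e_j and an edge {i, j} for each Q_k of the form ±e_i ± e_j, every connected component contains exactly as many edges as vertices, i.e., exactly one cycle.) -/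
/-! If more than `card S` of the `Qₖ` had support in `S`, the family would span a proper subspace
of `ℝⁿ`: the vectors supported in `S` span at most `card S` dimensions and the others at most one
each. A fixed proper subspace lies in the kernel of a nonzero functional `ψ`, and `ψ(η_α)` is a
nonzero polynomial in `α`, so it contains `η_α` for only finitely many `α`. Since `Q̃^{BCD}` is
finite there are finitely many such subspaces, and `α₀` is chosen beyond all the exceptional `α`. -/

open scoped Classical

/-- A family `(Q₁, …, Qₘ)` of vectors in `ℝⁿ` is `η`-oriented if `η` is a
strictly positive linear combination of the `Qₖ`. -/
def EtaOriented {n m : ℕ} (η : Fin n → ℝ) (Q : Fin m → Fin n → ℝ) : Prop :=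
  ∃ a : Fin m → ℝ, (∀ k, 0 < a k) ∧ ∑ k, a k • Q k = η

/-- The vector `η_α = (1, α, α², …, α^{n−1}) ∈ ℝⁿ`. -/
def etaVec (n : ℕ) (α : ℝ) : Fin n → ℝ := fun i => α ^ (i : ℕ)

open Module Submodule Finset Filter

theorem QBCD_apply_mem {n : ℕ} {v : Fin n → ℝ} (hv : v ∈ QBCD n) (i : Fin n) :
    v i ∈ ({-1, 0, 1} : Set ℝ) := by
  obtain ⟨j, hj | hj⟩ | ⟨a, b, hab, h | h | h | h⟩ := hv <;>
    subst_vars <;>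
    simp only [Pi.single_apply, Pi.add_apply, Pi.sub_apply, Pi.neg_apply, Set.mem_insert_iff,
      Set.mem_singleton_iff] <;>
    split_ifs
  all_goals try norm_num
  all_goals omega

theorem QBCD_finite (n : ℕ) : (QBCD n).Finite :=
  (Set.Finite.pi fun _ => (Set.toFinite {-1, 0, 1})).subset fun _ hv i _ => QBCD_apply_mem hv i

section Support

variable {K σ ι : Type*} [Field K] [DecidableEq σ]

theorem span_le_span_single_of_support_subset (S : Finset σ) {s : Set (σ → K)}
    (hs : ∀ v ∈ s, ∀ i, v i ≠ 0 → i ∈ S) :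
    span K s ≤ span K (S.image fun i => Pi.single i (1 : K) : Set (σ → K)) := by
  refine span_le.2 fun v hv => ?_
  have hv_eq : v = ∑ i ∈ S, v i • Pi.single i (1 : K) := by
    ext j
    simp only [Finset.sum_apply, Pi.smul_apply, Pi.single_apply, smul_eq_mul, mul_ite, mul_one,
      mul_zero, Finset.sum_ite_eq]
    split_ifs with hj
    · rfl
    · exact not_imp_comm.1 (hs v hv j) hj
  rw [hv_eq]
  exact sum_mem fun i hi => smul_mem _ _ (subset_span (mem_image_of_mem _ hi))

theorem finrank_span_range_add_card_le [Fintype ι] (Q : ι → σ → K) (S : Finset σ) :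
    finrank K (span K (Set.range Q)) + #{k | ∀ i, Q k i ≠ 0 → i ∈ S} ≤ #S + Fintype.card ι := by
  set T : Finset ι := {k | ∀ i, Q k i ≠ 0 → i ∈ S}
  have hrange : Set.range Q = (T.image Q : Set (σ → K)) ∪ (Tᶜ.image Q : Set (σ → K)) := by
    rw [← coe_union, ← image_union, union_compl, coe_image, coe_univ, Set.image_univ]
  have hT : finrank K (span K (T.image Q : Set (σ → K))) ≤ #S := by
    refine (finrank_mono (span_le_span_single_of_support_subset S ?_)).trans
      ((finrank_span_finset_le_card _).trans card_image_le)
    simp only [coe_image, Set.forall_mem_image]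
    exact fun k hk => (mem_filter.1 hk).2
  have hTc : finrank K (span K (Tᶜ.image Q : Set (σ → K))) ≤ #Tᶜ :=
    (finrank_span_finset_le_card _).trans card_image_le
  calc finrank K (span K (Set.range Q)) + #T
      ≤ finrank K (span K (T.image Q : Set (σ → K))) +
          finrank K (span K (Tᶜ.image Q : Set (σ → K))) + #T := by
        rw [hrange, span_union]
        gcongr
        exact finrank_add_le_finrank_add_finrank _ _
    _ ≤ #S + #Tᶜ + #T := by gcongr
    _ = #S + Fintype.card ι := by rw [add_assoc, card_compl_add_card]

end Support

theorem LinearMap.apply_eq_sum_mul_single {R ι : Type*} [CommSemiring R] [Fintype ι]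
    [DecidableEq ι] (f : (ι → R) →ₗ[R] R) (v : ι → R) :
    f v = ∑ i, v i * f (Pi.single i 1) := by
  conv_lhs => rw [← univ_sum_single v, map_sum]
  refine sum_congr rfl fun i _ => ?_
  rw [← smul_eq_mul, ← map_smul, ← Pi.single_smul', smul_eq_mul, mul_one]

open Polynomial in
theorem finite_setOf_etaVec_mem {n : ℕ} {W : Submodule ℝ (Fin n → ℝ)} (hW : W ≠ ⊤) :
    {α | etaVec n α ∈ W}.Finite := by
  obtain ⟨f, hf, hWf⟩ := W.exists_le_ker_of_lt_top hW.lt_top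
  set p := ofFn n fun i => f (Pi.single i 1)
  have hp : p ≠ 0 := by
    rw [Ne, ← map_zero (ofFn n), (injective_ofFn n).eq_iff]
    intro h
    refine hf (LinearMap.ext fun v => ?_)
    rw [f.apply_eq_sum_mul_single]
    simp [fun i => congrFun h i]
  have heval : ∀ α, p.eval α = f (etaVec n α) := fun α => by
    rw [f.apply_eq_sum_mul_single]
    simp [p, ofFn_eq_sum_monomial, eval_finsetSum, etaVec, mul_comm]
  refine (finite_setOfPred_isRoot hp).subset fun α hα => ?_
  rw [Set.mem_ofPred_eq, IsRoot, heval]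
  exact hWf hα

theorem eventually_etaVec_mem_span_imp_eq_top {n : ℕ} {A : Set (Fin n → ℝ)} (hA : A.Finite) :
    ∀ᶠ α in atTop, ∀ s ⊆ A, etaVec n α ∈ span ℝ s → span ℝ s = ⊤ := by
  refine (eventually_all_finite hA.finite_subsets).2 fun s _ => ?_
  by_cases hs : span ℝ s = ⊤
  · exact Eventually.of_forall fun _ _ => hs
  · exact ((finite_setOf_etaVec_mem hs).eventually_cofinite_notMem.filter_mono
      atTop_le_cofinite).mono fun _ hα hmem => absurd hmem hα

theorem etaOriented_support_bound_general (n : ℕ) :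
    ∃ α₀ : ℝ, 1 ≤ α₀ ∧ ∀ α : ℝ, α₀ < α →
      ∀ Q : Fin n → Fin n → ℝ, Function.Injective Q → (∀ k, Q k ∈ QBCD n) →
        EtaOriented (etaVec n α) Q →
          ∀ S : Finset (Fin n),
            (Finset.univ.filter fun k : Fin n => ∀ i : Fin n, Q k i ≠ 0 → i ∈ S).card
              ≤ S.card := by
  obtain ⟨M, hM⟩ := eventually_atTop.1 (eventually_etaVec_mem_span_imp_eq_top (QBCD_finite n))
  refine ⟨max 1 M, le_max_left _ _, fun α hα Q _ hQ ⟨a, _, ha⟩ S => ?_⟩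
  have hspan : span ℝ (Set.range Q) = ⊤ :=
    hM α ((le_max_right 1 M).trans hα.le) _ (Set.range_subset_iff.2 hQ)
      (mem_span_range_iff_exists_fun ℝ |>.2 ⟨a, ha⟩)
  have hrank := finrank_span_range_add_card_le Q S
  rw [hspan, finrank_top, finrank_fin_fun, Fintype.card_fin] at hrank
  -- the two filters differ only in their `Decidable` instances
  convert Nat.le_of_add_le_add_left (hrank.trans_eq (add_comm _ _)) using 3

/-- for all sufficiently large `α`, if `Q₁, …, Qₙ` are pairwise
distinct elements of `Q̃^{BCD}` forming an `η_α`-oriented family, then for every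
subset `S` of coordinates, at most `card S` of the `Qₖ` have support inside `S`
(each connected component of the associated graph has exactly one cycle). -/
theorem etaOriented_support_bound (n : ℕ) (hn : 1 ≤ n) :
    ∃ α₀ : ℝ, 1 ≤ α₀ ∧ ∀ α : ℝ, α₀ < α →
      ∀ Q : Fin n → Fin n → ℝ, Function.Injective Q → (∀ k, Q k ∈ QBCD n) →
        EtaOriented (etaVec n α) Q →
          ∀ S : Finset (Fin n),
            (Finset.univ.filter fun k : Fin n => ∀ i : Fin n, Q k i ≠ 0 → i ∈ S).card
              ≤ S.card :=
  etaOriented_support_bound_general n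
end

section
/- Let n ≥ 1, let m be a permutation of {1, …, n}, and let p₁, …, pₙ and q₁, …, q_{n−1} be elements of {+1, −1}. Define vectors Q₁ := p₁ e_{m(1)} and Q_{i+1} := q_i e_{m(i)} + p_{i+1} e_{m(i+1)} for 1 ≤ i ≤ n − 1, and set M(i) := max{ m(j) : i ≤ j ≤ n }. Then there exists a real number α₀ ≥ 1 such that for every real α > α₀: the family (Q₁, …, Qₙ) is η_α-oriented if and only if pₙ = +1 and, for every 1 ≤ i ≤ n − 1, one has pᵢ qᵢ = −1 whenever M(i) > m(i), and pᵢ = +1 whenever M(i) = m(i). -/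
/-- `M i = max { m j : j ≥ i }` (as a natural number, `m` a permutation). -/
def maxLabel {n : ℕ} (m : Equiv.Perm (Fin n)) (i : Fin n) : ℕ :=
  (Finset.Ici i).sup fun j => (m j : ℕ)

/-!
Reading off the coordinate `e_{m(l)}` of `∑ aₖ Qₖ = η_α` gives the bidiagonal system
`pₗ aₗ + qₗ aₗ₊₁ = α^{m(l)}` (with `aₙ = 0`), which back substitution solves uniquely. For large `α`
the solution behaves like `aₗ ≈ sₗ α^{M(l)}`, where the sign `sₗ` resets to `pₗ` when `l` is a
record (`M(l) = m(l)`) and otherwise propagates as `sₗ = -pₗ qₗ sₗ₊₁`. Quantitatively,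
`α |sₗ aₗ - α^{M(l)}| ≤ (n - l - 1) α^{M(l)}`, so for `α > n` every `aₗ` has the sign `sₗ`. The
family is therefore `η_α`-oriented iff all `sₗ = 1`, and unwinding the recursion for `sₗ` gives
the sign rules.
-/

section Chain

variable {n : ℕ} {μ : ℕ → ℕ}

-- The paper's `M(l)`, 0-indexed; it is `0` for `l ≥ n`.
def tailMax (n : ℕ) (μ : ℕ → ℕ) (l : ℕ) : ℕ := (Finset.Ico l n).sup μ

theorem tailMax_of_le {l : ℕ} (h : n ≤ l) : tailMax n μ l = 0 := by
  simp [tailMax, Finset.Ico_eq_empty_of_le h]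

theorem lt_of_lt_tailMax {k l : ℕ} (h : k < tailMax n μ l) : l < n := by
  by_contra! hl
  rw [tailMax_of_le hl] at h
  omega

theorem tailMax_eq_max {l : ℕ} (hl : l < n) :
    tailMax n μ l = max (μ l) (tailMax n μ (l + 1)) := by
  rw [tailMax, tailMax, ← Finset.insert_Ico_add_one_left_eq_Ico hl, Finset.sup_insert]

theorem le_tailMax {l : ℕ} (hl : l < n) : μ l ≤ tailMax n μ l := by
  rw [tailMax_eq_max hl]; exact le_max_left _ _

theorem tailMax_of_succ_eq {l : ℕ} (hl : l + 1 = n) : tailMax n μ l = μ l := by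
  rw [tailMax_eq_max (by omega), tailMax_of_le hl.ge, Nat.max_zero]

theorem succ_lt_of_lt_tailMax {l : ℕ} (h : μ l < tailMax n μ l) : l + 1 < n := by
  have hl := lt_of_lt_tailMax h
  by_contra hl'
  rw [tailMax_of_succ_eq (by omega)] at h
  exact lt_irrefl _ h

theorem ne_tailMax_succ {l : ℕ} (hμ : Set.InjOn μ (Set.Iio n)) (hl : l + 1 < n) :
    μ l ≠ tailMax n μ (l + 1) := by
  obtain ⟨j, hj, hjmax⟩ := Finset.exists_mem_eq_sup (Finset.Ico (l + 1) n)
    ⟨l + 1, by simp [hl]⟩ μ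
  rw [Finset.mem_Ico] at hj
  rw [tailMax, hjmax]
  intro he
  have := hμ (by simp; omega) (by simp; omega) he
  omega

variable (n μ) (p q : ℕ → ℝ) (α : ℝ)

def chainSign (l : ℕ) : ℝ :=
  if μ l < tailMax n μ l then -(p l * q l) * chainSign (l + 1) else p l
termination_by n - l
decreasing_by have := lt_of_lt_tailMax ‹_›; omega

def chainSol (l : ℕ) : ℝ :=
  if l < n then p l * (α ^ μ l - q l * chainSol (l + 1)) else 0
termination_by n - l

variable {n μ p q α}

theorem chainSign_of_lt {l : ℕ} (h : μ l < tailMax n μ l) :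
    chainSign n μ p q l = -(p l * q l) * chainSign n μ p q (l + 1) := by
  rw [chainSign, if_pos h]

theorem chainSign_of_not_lt {l : ℕ} (h : ¬ μ l < tailMax n μ l) :
    chainSign n μ p q l = p l := by
  rw [chainSign, if_neg h]

theorem chainSol_of_lt {l : ℕ} (h : l < n) :
    chainSol n μ p q α l = p l * (α ^ μ l - q l * chainSol n μ p q α (l + 1)) := by
  rw [chainSol, if_pos h]

theorem chainSol_of_le {l : ℕ} (h : n ≤ l) : chainSol n μ p q α l = 0 := by
  rw [chainSol, if_neg (by omega)]

theorem chainSol_spec {l : ℕ} (hp : ∀ l < n, |p l| = 1) (hl : l < n) :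
    p l * chainSol n μ p q α l + q l * chainSol n μ p q α (l + 1) = α ^ μ l := by
  have hp2 : p l * p l = 1 := by rw [← abs_mul_abs_self, hp l hl, one_mul]
  rw [chainSol_of_lt hl]
  linear_combination (α ^ μ l - q l * chainSol n μ p q α (l + 1)) * hp2

theorem abs_chainSign {l : ℕ} (hp : ∀ l < n, |p l| = 1) (hq : ∀ l, l + 1 < n → |q l| = 1)
    (hl : l < n) : |chainSign n μ p q l| = 1 := by
  by_cases h : μ l < tailMax n μ l
  · have hl' := succ_lt_of_lt_tailMax h
    rw [chainSign_of_lt h, abs_mul, abs_neg, abs_mul, hp l hl, hq l hl', abs_chainSign hp hq hl']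
    norm_num
  · rw [chainSign_of_not_lt h, hp l hl]
termination_by n - l

theorem mul_abs_sub_le_of_sign_propagates {α p q s a a' x A c : ℝ} (hα : 0 ≤ α)
    (hq : |q| = 1) (hs : |s| = 1) (hsys : p * a + q * a' = x) (hx : 0 ≤ x) (hxA : α * x ≤ A)
    (IH : α * |s * a' - A| ≤ c * A) : α * |-(p * q) * s * a - A| ≤ (c + 1) * A := by
  have hq2 : q * q = 1 := by rw [← abs_mul_abs_self, hq, one_mul]
  have key : -(p * q) * s * a - A = (s * a' - A) - q * s * x := by
    linear_combination (-(q * s)) * hsys + s * a' * hq2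
  calc α * |-(p * q) * s * a - A| ≤ α * |s * a' - A| + α * x := by
        rw [key, ← mul_add]
        refine mul_le_mul_of_nonneg_left ((abs_sub _ _).trans ?_) hα
        rw [abs_mul, abs_mul, hq, hs, one_mul, one_mul, abs_of_nonneg hx]
    _ ≤ (c + 1) * A := by linarith

theorem mul_abs_sub_le_of_sign_resets {α p q s a a' x A c : ℝ} (hα : 1 ≤ α) (hc : 0 ≤ c)
    (hq : |q| = 1) (hs : |s| = 1) (hsys : p * a + q * a' = x) (hA : 0 ≤ A) (hAx : α * A ≤ x)
    (IH : α * |s * a' - A| ≤ c * A) : α * |p * a - x| ≤ (c + 1) * x := by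
  have ha' : |a'| ≤ A + |s * a' - A| := by
    calc |a'| = |A + (s * a' - A)| := by rw [add_sub_cancel, abs_mul, hs, one_mul]
      _ ≤ A + |s * a' - A| := (abs_add_le _ _).trans (by rw [abs_of_nonneg hA])
  have hcA : c * A ≤ c * (α * A) := mul_le_mul_of_nonneg_left (le_mul_of_one_le_left hA hα) hc
  calc α * |p * a - x| = α * |a'| := by
        rw [show p * a - x = -(q * a') by linear_combination hsys, abs_neg, abs_mul, hq, one_mul]
    _ ≤ α * A + α * |s * a' - A| := by
        rw [← mul_add]; exact mul_le_mul_of_nonneg_left ha' (by linarith)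
    _ ≤ (c + 1) * (α * A) := by linarith
    _ ≤ (c + 1) * x := mul_le_mul_of_nonneg_left hAx (by linarith)

theorem mul_abs_chainSign_mul_sub_le {l : ℕ} (hα : 1 ≤ α) (hp : ∀ l < n, |p l| = 1)
    (hq : ∀ l, l + 1 < n → |q l| = 1) (hμ : Set.InjOn μ (Set.Iio n)) {a : ℕ → ℝ}
    (ha_top : a n = 0) (ha : ∀ l < n, p l * a l + q l * a (l + 1) = α ^ μ l) (hl : l < n) :
    α * |chainSign n μ p q l * a l - α ^ tailMax n μ l| ≤ (n - l - 1) * α ^ tailMax n μ l := by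
  have hα0 : 0 < α := by linarith
  rcases Nat.lt_or_ge (l + 1) n with hl' | hlast
  · have IH := mul_abs_chainSign_mul_sub_le (l := l + 1) hα hp hq hμ ha_top ha hl'
    have hc : 0 ≤ (n : ℝ) - (l + 1 : ℕ) - 1 := by
      have : ((l + 1 + 1 : ℕ) : ℝ) ≤ n := by exact_mod_cast hl'
      push_cast at this ⊢; linarith
    have hcl : (n : ℝ) - l - 1 = (n - (l + 1 : ℕ) - 1) + 1 := by push_cast; ring
    rw [hcl]
    rcases lt_or_gt_of_ne (ne_tailMax_succ hμ hl') with hlt | hgt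
    · have hM : tailMax n μ l = tailMax n μ (l + 1) := by
        rw [tailMax_eq_max hl]; exact max_eq_right hlt.le
      rw [chainSign_of_lt (by rw [hM]; exact hlt), hM]
      refine mul_abs_sub_le_of_sign_propagates hα0.le (hq l hl') (abs_chainSign hp hq hl')
        (ha l hl) (by positivity) ?_ IH
      rw [← pow_succ']; exact pow_le_pow_right₀ hα hlt
    · have hM : tailMax n μ l = μ l := by rw [tailMax_eq_max hl]; exact max_eq_left hgt.le
      rw [chainSign_of_not_lt (by omega), hM]
      refine mul_abs_sub_le_of_sign_resets hα hc (hq l hl') (abs_chainSign hp hq hl')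
        (ha l hl) (by positivity) ?_ IH
      rw [← pow_succ']; exact pow_le_pow_right₀ hα hgt
  · have hlast : l + 1 = n := by omega
    have hM : tailMax n μ l = μ l := tailMax_of_succ_eq hlast
    have hsys := ha l hl
    rw [hlast, ha_top, mul_zero, add_zero] at hsys
    have hn : (n : ℝ) = l + 1 := by exact_mod_cast hlast.symm
    rw [chainSign_of_not_lt (by omega), hM, hsys, hn]
    simp
termination_by n - l

theorem chainSign_mul_pos {l : ℕ} (hα : (n : ℝ) < α) (hp : ∀ l < n, |p l| = 1)
    (hq : ∀ l, l + 1 < n → |q l| = 1) (hμ : Set.InjOn μ (Set.Iio n)) {a : ℕ → ℝ}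
    (ha_top : a n = 0) (ha : ∀ l < n, p l * a l + q l * a (l + 1) = α ^ μ l) (hl : l < n) :
    0 < chainSign n μ p q l * a l := by
  have hn : (l : ℝ) + 1 ≤ n := by exact_mod_cast hl
  have hα1 : 1 ≤ α := by linarith [(l.cast_nonneg : (0 : ℝ) ≤ l)]
  have hα0 : 0 < α := by linarith
  have hA : 0 < α ^ tailMax n μ l := pow_pos hα0 _
  have hbound := mul_abs_chainSign_mul_sub_le hα1 hp hq hμ ha_top ha hl
  have hdev := neg_abs_le (chainSign n μ p q l * a l - α ^ tailMax n μ l)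
  have : 0 < α * (chainSign n μ p q l * a l) := by nlinarith
  exact pos_of_mul_pos_right this hα0.le

theorem exists_pos_chain_solution_iff (hα : (n : ℝ) < α) (hp : ∀ l < n, |p l| = 1)
    (hq : ∀ l, l + 1 < n → |q l| = 1) (hμ : Set.InjOn μ (Set.Iio n)) :
    (∃ a : ℕ → ℝ, (∀ l < n, 0 < a l) ∧ a n = 0 ∧
        ∀ l < n, p l * a l + q l * a (l + 1) = α ^ μ l) ↔
      ∀ l < n, chainSign n μ p q l = 1 := by
  constructor
  · rintro ⟨a, ha_pos, ha_top, ha⟩ l hl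
    have hpos := chainSign_mul_pos hα hp hq hμ ha_top ha hl
    rcases (abs_eq zero_le_one).mp (abs_chainSign hp hq hl) with h | h
    · exact h
    · rw [h] at hpos; linarith [ha_pos l hl]
  · intro hs
    refine ⟨chainSol n μ p q α, fun l hl => ?_, chainSol_of_le le_rfl,
      fun l hl => chainSol_spec hp hl⟩
    simpa [hs l hl] using chainSign_mul_pos hα hp hq hμ (chainSol_of_le le_rfl)
      (fun l hl => chainSol_spec hp hl) hl

theorem chainSign_eq_one {l : ℕ} (hlast : p (n - 1) = 1)
    (hrules : ∀ l, l + 1 < n →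
      (μ l < tailMax n μ l → p l * q l = -1) ∧ (tailMax n μ l = μ l → p l = 1))
    (hl : l < n) : chainSign n μ p q l = 1 := by
  by_cases h : μ l < tailMax n μ l
  · have hl' := succ_lt_of_lt_tailMax h
    rw [chainSign_of_lt h, (hrules l hl').1 h, chainSign_eq_one hlast hrules hl']
    norm_num
  · rw [chainSign_of_not_lt h]
    rcases Nat.lt_or_ge (l + 1) n with hl' | hl'
    · exact (hrules l hl').2 (le_antisymm (not_lt.mp h) (le_tailMax hl))
    · rwa [show l = n - 1 by omega]
termination_by n - l

theorem chainSign_eq_one_iff (hn : 0 < n) :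
    (∀ l < n, chainSign n μ p q l = 1) ↔
      p (n - 1) = 1 ∧ ∀ l, l + 1 < n →
        (μ l < tailMax n μ l → p l * q l = -1) ∧ (tailMax n μ l = μ l → p l = 1) := by
  refine ⟨fun hs => ⟨?_, fun l hl' => ⟨fun h => ?_, fun h => ?_⟩⟩,
    fun ⟨hlast, hrules⟩ l hl => chainSign_eq_one hlast hrules hl⟩
  · have := hs (n - 1) (by omega)
    rwa [chainSign_of_not_lt (by rw [tailMax_of_succ_eq (by omega)]; exact lt_irrefl _)] at this
  · have := hs l (by omega)
    rw [chainSign_of_lt h, hs (l + 1) hl'] at this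
    linarith
  · have := hs l (by omega)
    rwa [chainSign_of_not_lt (by omega)] at this

end Chain

section Coordinates

variable {n : ℕ} {m : Equiv.Perm (Fin n)} {p : Fin n → ℝ} {q : ℕ → ℝ} {Q : Fin n → Fin n → ℝ}

theorem straightTree_apply_perm (hn : 0 < n)
    (hQ0 : Q ⟨0, hn⟩ = p ⟨0, hn⟩ • (Pi.single (m ⟨0, hn⟩) 1 : Fin n → ℝ))
    (hQs : ∀ i : ℕ, ∀ h : i + 1 < n,
      Q ⟨i + 1, h⟩ = q i • (Pi.single (m ⟨i, Nat.lt_of_succ_lt h⟩) 1 : Fin n → ℝ)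
        + p ⟨i + 1, h⟩ • (Pi.single (m ⟨i + 1, h⟩) 1 : Fin n → ℝ))
    (k i : Fin n) :
    Q k (m i) = (if (k : ℕ) = i then p i else 0) + (if (k : ℕ) = i + 1 then q i else 0) := by
  obtain ⟨_ | j, hk⟩ := k <;> obtain ⟨i, hi⟩ := i
  · simp only [hQ0, Pi.smul_apply, Pi.single_apply, m.injective.eq_iff, Fin.ext_iff]
    split_ifs <;> first | omega | (subst_vars; simp_all)
  · simp only [hQs j hk, Pi.add_apply, Pi.smul_apply, Pi.single_apply, m.injective.eq_iff,
      Fin.ext_iff]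
    split_ifs <;> first | omega | (subst_vars; simp_all)

theorem sum_smul_apply_perm
    (hQ : ∀ k i : Fin n,
      Q k (m i) = (if (k : ℕ) = i then p i else 0) + (if (k : ℕ) = i + 1 then q i else 0))
    {a : ℕ → ℝ} (ha : a n = 0) (i : Fin n) :
    (∑ k : Fin n, a k • Q k) (m i) = p i * a i + q i * a (i + 1) := by
  simp only [Finset.sum_apply, Pi.smul_apply, hQ, smul_eq_mul]
  rw [Fin.sum_univ_eq_sum_range (fun k => a k * ((if k = i then p i else 0)
    + (if k = i + 1 then q i else 0)))]
  simp only [mul_add, mul_ite, mul_zero, Finset.sum_add_distrib, Finset.sum_ite_eq',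
    Finset.mem_range, i.isLt, if_true]
  split_ifs with h
  · ring
  · rw [show (i : ℕ) + 1 = n by omega, ha]; ring

theorem etaOriented_iff_exists_chain_solution
    (hQ : ∀ k i : Fin n,
      Q k (m i) = (if (k : ℕ) = i then p i else 0) + (if (k : ℕ) = i + 1 then q i else 0))
    {P : ℕ → ℝ} (hP : ∀ i : Fin n, P i = p i) {μ : ℕ → ℕ} (hμ : ∀ i : Fin n, μ i = m i)
    (α : ℝ) :
    EtaOriented (etaVec n α) Q ↔ ∃ a : ℕ → ℝ, (∀ l < n, 0 < a l) ∧ a n = 0 ∧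
      ∀ l < n, P l * a l + q l * a (l + 1) = α ^ μ l := by
  have key : ∀ a : ℕ → ℝ, a n = 0 → ((∑ k : Fin n, a k • Q k) = etaVec n α ↔
      ∀ l < n, P l * a l + q l * a (l + 1) = α ^ μ l) := by
    intro a ha
    rw [funext_iff, ← m.forall_congr_right, Fin.forall_iff]
    refine forall₂_congr fun l hl => ?_
    rw [sum_smul_apply_perm hQ ha, etaVec, ← hP ⟨l, hl⟩, ← hμ ⟨l, hl⟩]
  constructor
  · rintro ⟨a, ha_pos, ha⟩
    let a' : ℕ → ℝ := fun l => if h : l < n then a ⟨l, h⟩ else 0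
    refine ⟨a', fun l hl => by simp [a', hl, ha_pos], by simp [a'], (key a' (by simp [a'])).1 ?_⟩
    simpa [a'] using ha
  · rintro ⟨a, ha_pos, ha_top, ha⟩
    exact ⟨fun k => a k, fun k => ha_pos k k.isLt, (key a ha_top).2 ha⟩

theorem maxLabel_eq_tailMax {μ : ℕ → ℕ} (hμ : ∀ i : Fin n, μ i = m i) {l : ℕ} (hl : l < n) :
    maxLabel m ⟨l, hl⟩ = tailMax n μ l := by
  rw [maxLabel, tailMax, ← Fin.map_valEmbedding_Ici (a := ⟨l, hl⟩), Finset.sup_map]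
  exact Finset.sup_congr rfl fun j _ => (hμ j).symm

end Coordinates

/-- straight tree distinction rule: with
`Q₁ = p₁ e_{m(1)}`, `Q_{i+1} = q_i e_{m(i)} + p_{i+1} e_{m(i+1)}` and signs
`pᵢ, qᵢ ∈ {±1}`, for all sufficiently large `α` the family `(Q₁, …, Qₙ)` is
`η_α`-oriented iff `pₙ = +1` and for each `i < n`: `pᵢ qᵢ = −1` if
`M(i) > m(i)`, and `pᵢ = +1` if `M(i) = m(i)`. -/
theorem straight_tree_distinction_rule (n : ℕ) (hn : 0 < n) (m : Equiv.Perm (Fin n))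
    (p : Fin n → ℝ) (q : ℕ → ℝ)
    (hp : ∀ i, p i = 1 ∨ p i = -1)
    (hq : ∀ i : ℕ, i + 1 < n → q i = 1 ∨ q i = -1)
    (Q : Fin n → Fin n → ℝ)
    (hQ0 : Q ⟨0, hn⟩ = p ⟨0, hn⟩ • (Pi.single (m ⟨0, hn⟩) 1 : Fin n → ℝ))
    (hQs : ∀ i : ℕ, ∀ h : i + 1 < n,
      Q ⟨i + 1, h⟩ = q i • (Pi.single (m ⟨i, Nat.lt_of_succ_lt h⟩) 1 : Fin n → ℝ)
        + p ⟨i + 1, h⟩ • (Pi.single (m ⟨i + 1, h⟩) 1 : Fin n → ℝ)) :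
    ∃ α₀ : ℝ, 1 ≤ α₀ ∧ ∀ α : ℝ, α₀ < α →
      (EtaOriented (etaVec n α) Q ↔
        (p ⟨n - 1, by omega⟩ = 1 ∧
          ∀ i : ℕ, ∀ h : i + 1 < n,
            (maxLabel m ⟨i, Nat.lt_of_succ_lt h⟩ > (m ⟨i, Nat.lt_of_succ_lt h⟩ : ℕ) →
              p ⟨i, Nat.lt_of_succ_lt h⟩ * q i = -1) ∧
            (maxLabel m ⟨i, Nat.lt_of_succ_lt h⟩ = (m ⟨i, Nat.lt_of_succ_lt h⟩ : ℕ) →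
              p ⟨i, Nat.lt_of_succ_lt h⟩ = 1))) := by
  refine ⟨n, by exact_mod_cast hn, fun α hα => ?_⟩
  let P : ℕ → ℝ := fun l => if h : l < n then p ⟨l, h⟩ else 1
  let μ : ℕ → ℕ := fun l => if h : l < n then m ⟨l, h⟩ else 0
  have hP : ∀ i : Fin n, P i = p i := by simp [P]
  have hμ : ∀ i : Fin n, μ i = m i := by simp [μ]
  have hμ_inj : Set.InjOn μ (Set.Iio n) := fun i hi j hj h => by
    simpa [μ, Set.mem_Iio.mp hi, Set.mem_Iio.mp hj, Fin.val_inj] using h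
  have hP_abs : ∀ l < n, |P l| = 1 := fun l hl => by
    simpa [hl, P] using (abs_eq zero_le_one).mpr (hp ⟨l, hl⟩)
  have hq_abs : ∀ l, l + 1 < n → |q l| = 1 := fun l hl => (abs_eq zero_le_one).mpr (hq l hl)
  rw [etaOriented_iff_exists_chain_solution (straightTree_apply_perm hn hQ0 hQs) hP hμ,
    exists_pos_chain_solution_iff hα hP_abs hq_abs hμ_inj, chainSign_eq_one_iff hn]
  refine and_congr (by rw [← hP ⟨n - 1, by omega⟩]) (forall₂_congr fun l hl => ?_)
  rw [maxLabel_eq_tailMax hμ, ← hP ⟨l, _⟩, ← hμ ⟨l, _⟩]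
end

section
/- Let n ≥ 2, let m be a permutation of {1, …, n} with m(1) = n, and let p₁, …, pₙ and q₁, …, qₙ be elements of {+1, −1}. Define vectors Qᵢ := pᵢ e_{m(i)} + q_{i+1} e_{m(i+1)} for 1 ≤ i ≤ n − 1 and Qₙ := pₙ e_{m(n)} + q₁ e_{m(1)}, and assume Q₁, …, Qₙ are pairwise distinct. Then there exists a real number α₀ ≥ 1 such that for every real α > α₀: the family (Q₁, …, Qₙ) is η_α-oriented if and only if p₁ = +1, q₁ = +1, and qᵢ = −pᵢ for every 2 ≤ i ≤ n. -/
/-- The cyclic successor on `Fin n`. -/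
def cyclicSucc {n : ℕ} (hn : 0 < n) (i : Fin n) : Fin n :=
  ⟨((i : ℕ) + 1) % n, Nat.mod_lt _ hn⟩

set_option maxHeartbeats 2000000 in
/-- loop distinction rule: with cyclically arranged vectors
`Qᵢ = pᵢ e_{m(i)} + q_{i+1} e_{m(i+1)}` (indices mod `n`), pairwise distinct,
where the first vertex carries the largest label (`m(1) = n`), for all
sufficiently large `α` the family is `η_α`-oriented iff `p₁ = +1`, `q₁ = +1`
and `qᵢ = −pᵢ` for all `i ≥ 2`. -/
theorem loop_distinction_rule (n : ℕ) (hn : 2 ≤ n) (m : Equiv.Perm (Fin n))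
    (p q : Fin n → ℝ)
    (hp : ∀ i, p i = 1 ∨ p i = -1) (hq : ∀ i, q i = 1 ∨ q i = -1)
    (hm : m ⟨0, by omega⟩ = ⟨n - 1, by omega⟩)
    (Q : Fin n → Fin n → ℝ)
    (hQ : ∀ i, Q i = p i • (Pi.single (m i) 1 : Fin n → ℝ)
      + q (cyclicSucc (by omega) i) •
        (Pi.single (m (cyclicSucc (by omega) i)) 1 : Fin n → ℝ))
    (hdist : Function.Injective Q) :
    ∃ α₀ : ℝ, 1 ≤ α₀ ∧ ∀ α : ℝ, α₀ < α →
      (EtaOriented (etaVec n α) Q ↔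
        (p ⟨0, by omega⟩ = 1 ∧ q ⟨0, by omega⟩ = 1 ∧
          ∀ i : Fin n, 1 ≤ (i : ℕ) → q i = -p i)) := by
  have hn0 : 0 < n := by omega
  have hnm1 : n - 1 < n := by omega
  set succ : Fin n → Fin n := cyclicSucc hn0 with hsuccdef
  set pred : Fin n → Fin n := fun j => ⟨((j : ℕ) + (n - 1)) % n, Nat.mod_lt _ hn0⟩
    with hpreddef
  have hsp : ∀ j, succ (pred j) = j := by
    intro j
    simp only [hsuccdef, hpreddef, cyclicSucc]
    apply Fin.ext
    simp only
    rw [Nat.mod_add_mod, show (j : ℕ) + (n - 1) + 1 = (j : ℕ) + n by omega,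
      Nat.add_mod_right, Nat.mod_eq_of_lt j.isLt]
  have hps : ∀ k, pred (succ k) = k := by
    intro k
    simp only [hsuccdef, hpreddef, cyclicSucc]
    apply Fin.ext
    simp only
    rw [Nat.mod_add_mod, show (k : ℕ) + 1 + (n - 1) = (k : ℕ) + n by omega,
      Nat.add_mod_right, Nat.mod_eq_of_lt k.isLt]
  have hpred0 : pred ⟨0, hn0⟩ = ⟨n - 1, hnm1⟩ := by
    apply Fin.ext
    simp only [hpreddef]
    rw [Nat.zero_add, Nat.mod_eq_of_lt hnm1]
  have hpredpos : ∀ j : Fin n, 1 ≤ (j : ℕ) → pred j = ⟨(j : ℕ) - 1, by omega⟩ := by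
    intro j hj
    apply Fin.ext
    simp only [hpreddef]
    rw [show (j : ℕ) + (n - 1) = ((j : ℕ) - 1) + n by omega, Nat.add_mod_right,
      Nat.mod_eq_of_lt (by omega)]
  have hsuccinj : Function.Injective succ := by
    intro x y h
    have := congrArg pred h
    rwa [hps, hps] at this
  have heval : ∀ (a : Fin n → ℝ) (j : Fin n),
      (∑ k, a k • Q k) (m j) = a j * p j + a (pred j) * q j := by
    intro a j
    have hterm : ∀ k : Fin n, (a k • Q k) (m j) =
        (if j = k then a k * p k else 0) +
        (if pred j = k then a k * q (succ k) else 0) := by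
      intro k
      rw [hQ k]
      simp only [Pi.smul_apply, Pi.add_apply, Pi.single_apply, smul_eq_mul]
      have h1 : (m j = m k) ↔ (j = k) := m.injective.eq_iff
      have h2 : (m j = m (succ k)) ↔ (pred j = k) := by
        rw [m.injective.eq_iff]
        constructor
        · intro h; rw [h, hps]
        · intro h; rw [← h, hsp]
      simp only [h1, h2]
      split_ifs <;> ring
    rw [Finset.sum_apply, Finset.sum_congr rfl (fun k _ => hterm k),
      Finset.sum_add_distrib, Finset.sum_ite_eq, Finset.sum_ite_eq]
    simp [hsp]
  have hEta : ∀ α : ℝ, EtaOriented (etaVec n α) Q ↔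
      ∃ a : Fin n → ℝ, (∀ k, 0 < a k) ∧
        ∀ j, a j * p j + a (pred j) * q j = α ^ ((m j : ℕ)) := by
    intro α
    constructor
    · rintro ⟨a, ha, hsum⟩
      refine ⟨a, ha, fun j => ?_⟩
      rw [← heval a j, hsum]
      rfl
    · rintro ⟨a, ha, hsum⟩
      refine ⟨a, ha, ?_⟩
      funext l
      calc (∑ k, a k • Q k) l = (∑ k, a k • Q k) (m (m.symm l)) := by
            rw [m.apply_symm_apply]
        _ = α ^ ((m (m.symm l) : ℕ)) := by rw [heval]; exact hsum _
        _ = etaVec n α l := by rw [m.apply_symm_apply]; rfl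
  have hmle : ∀ j : Fin n, (j : ℕ) ≠ 0 → (m j : ℕ) ≤ n - 2 := by
    intro j hj
    have h1 : m j ≠ m ⟨0, hn0⟩ := by
      intro h
      exact hj (congrArg Fin.val (m.injective h))
    have h2 : m ⟨0, hn0⟩ = ⟨n - 1, hnm1⟩ := hm
    have h3 : (m j : ℕ) ≠ n - 1 := by
      intro h
      exact h1 (by rw [h2]; exact Fin.ext h)
    have := (m j).isLt
    omega
  have hm0 : (m ⟨0, hn0⟩ : ℕ) = n - 1 := by
    have h2 : m ⟨0, hn0⟩ = ⟨n - 1, hnm1⟩ := hm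
    rw [h2]
  have hcn : (2 : ℝ) ≤ (n : ℝ) := by exact_mod_cast hn
  refine ⟨3 * n, by linarith, ?_⟩
  intro α hα
  have hα1 : 1 < α := by nlinarith
  have hα0 : 0 < α := by linarith
  have hpow : α ^ (n - 1) = α ^ (n - 2) * α := by
    rw [← pow_succ]; congr 1; omega
  have hpow2pos : 0 < α ^ (n - 2) := pow_pos hα0 _
  have hcastn1 : ((n - 1 : ℕ) : ℝ) = (n : ℝ) - 1 := by
    rw [Nat.cast_sub (by omega)]; norm_num
  rw [hEta]
  constructor
  · rintro ⟨a, hapos, heq⟩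
    have hdiff : ∀ j : Fin n, (j : ℕ) ≠ 0 → |a j - a (pred j)| ≤ α ^ (n - 2) := by
      intro j hj
      have hb := heq j
      have hle : α ^ ((m j : ℕ)) ≤ α ^ (n - 2) :=
        pow_le_pow_right₀ hα1.le (hmle j hj)
      have hgt : 0 < α ^ ((m j : ℕ)) := pow_pos hα0 _
      have h1 := hapos j
      have h2 := hapos (pred j)
      rw [abs_le]
      rcases hp j with h3 | h3 <;> rcases hq j with h4 | h4 <;>
        rw [h3, h4] at hb <;> constructor <;> nlinarith
    have hchain : ∀ (k : ℕ) (hk : k < n), |a ⟨k, hk⟩ - a ⟨0, hn0⟩| ≤ k * α ^ (n - 2) := by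
      intro k
      induction k with
      | zero => intro hk; simp
      | succ t ih =>
        intro hk
        have ht : t < n := by omega
        have h1 := ih ht
        have h2 := hdiff ⟨t + 1, hk⟩ (by simp)
        rw [hpredpos ⟨t + 1, hk⟩ (by simp)] at h2
        have h3 : (⟨(↑(⟨t + 1, hk⟩ : Fin n) : ℕ) - 1, by omega⟩ : Fin n) = ⟨t, ht⟩ := by
          apply Fin.ext; simp
        rw [h3] at h2
        calc |a ⟨t + 1, hk⟩ - a ⟨0, hn0⟩|
            ≤ |a ⟨t + 1, hk⟩ - a ⟨t, ht⟩| + |a ⟨t, ht⟩ - a ⟨0, hn0⟩| := abs_sub_le _ _ _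
          _ ≤ α ^ (n - 2) + t * α ^ (n - 2) := add_le_add h2 h1
          _ = (t + 1 : ℕ) * α ^ (n - 2) := by push_cast; ring
    have hall : ∀ j : Fin n, |a j - a ⟨0, hn0⟩| ≤ ((n : ℝ) - 1) * α ^ (n - 2) := by
      intro j
      have h1 := hchain j.val j.isLt
      have h2 : ((j : ℕ) : ℝ) ≤ (n : ℝ) - 1 := by
        rw [← hcastn1]
        exact_mod_cast (by omega : (j : ℕ) ≤ n - 1)
      have h4 : (↑(j : ℕ) : ℝ) * α ^ (n - 2) ≤ ((n : ℝ) - 1) * α ^ (n - 2) := by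
        nlinarith
      have h5 := h1.trans h4
      simpa using h5
    have hE0 : a ⟨0, hn0⟩ * p ⟨0, hn0⟩ + a ⟨n - 1, hnm1⟩ * q ⟨0, hn0⟩ = α ^ (n - 1) := by
      have h := heq ⟨0, hn0⟩
      rw [hpred0, hm0] at h
      exact h
    obtain ⟨habs1, habs2⟩ := abs_le.mp (hall ⟨n - 1, hnm1⟩)
    have ha0 := hapos ⟨0, hn0⟩
    have han1 := hapos ⟨n - 1, hnm1⟩
    have hsumge : α ^ (n - 1) ≤ a ⟨0, hn0⟩ + a ⟨n - 1, hnm1⟩ := by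
      rcases hp ⟨0, hn0⟩ with h3 | h3 <;> rcases hq ⟨0, hn0⟩ with h4 | h4 <;>
        rw [h3, h4] at hE0 <;> linarith
    have hbig : ∀ j : Fin n, α ^ (n - 2) < a j := by
      intro j
      obtain ⟨h1, h2⟩ := abs_le.mp (hall j)
      linarith [mul_pos hpow2pos (show (0 : ℝ) < α - 3 * (n : ℝ) + 1 by linarith)]
    have hkey0 : p ⟨0, hn0⟩ = 1 ∧ q ⟨0, hn0⟩ = 1 := by
      rcases hp ⟨0, hn0⟩ with h3 | h3 <;> rcases hq ⟨0, hn0⟩ with h4 | h4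
      · exact ⟨h3, h4⟩
      · exfalso; rw [h3, h4] at hE0
        linarith [mul_pos hpow2pos (show (0 : ℝ) < α - (n : ℝ) + 1 by linarith)]
      · exfalso; rw [h3, h4] at hE0
        linarith [mul_pos hpow2pos (show (0 : ℝ) < α - (n : ℝ) + 1 by linarith)]
      · exfalso; rw [h3, h4] at hE0; linarith [pow_pos hα0 (n - 1)]
    have hkeyr : ∀ i : Fin n, 1 ≤ (i : ℕ) → q i = -p i := by
      intro i hi
      have hb := heq i
      have hle : α ^ ((m i : ℕ)) ≤ α ^ (n - 2) :=
        pow_le_pow_right₀ hα1.le (hmle i (by omega))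
      have hgt : 0 < α ^ ((m i : ℕ)) := pow_pos hα0 _
      have h1 := hbig i
      have h2 := hapos (pred i)
      rcases hp i with h3 | h3 <;> rcases hq i with h4 | h4 <;> rw [h3, h4] at hb ⊢ <;>
        first
        | (exfalso; linarith [hapos i])
        | norm_num
    exact ⟨hkey0.1, hkey0.2, hkeyr⟩
  · rintro ⟨hp0, hq0, hqp⟩
    have hp0' : p ⟨0, hn0⟩ = 1 := hp0
    have hq0' : q ⟨0, hn0⟩ = 1 := hq0
    set f : ℕ → ℝ := fun k =>
      p ⟨k % n, Nat.mod_lt _ hn0⟩ * α ^ ((m ⟨k % n, Nat.mod_lt _ hn0⟩ : ℕ)) with hfdef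
    set S : ℕ → ℝ := fun t => ∑ k ∈ Finset.range t, f (k + 1) with hSdef
    set c : ℝ := (α ^ (n - 1) - S (n - 1)) / 2 with hcdef
    have hmk : ∀ j : Fin n, (⟨(j : ℕ) % n, Nat.mod_lt _ hn0⟩ : Fin n) = j :=
      fun j => Fin.ext (Nat.mod_eq_of_lt j.isLt)
    have hfval : ∀ j : Fin n, f (j : ℕ) = p j * α ^ ((m j : ℕ)) := by
      intro j
      show p ⟨(j : ℕ) % n, _⟩ * α ^ ((m ⟨(j : ℕ) % n, _⟩ : ℕ)) = _
      rw [hmk j]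
    have hfabs : ∀ k : ℕ, 1 ≤ k → k ≤ n - 1 → |f k| ≤ α ^ (n - 2) := by
      intro k h1 h2
      have hk : k < n := by omega
      have hj : ((⟨k, hk⟩ : Fin n) : ℕ) = k := rfl
      have := hfval ⟨k, hk⟩
      rw [hj] at this
      rw [this, abs_mul, abs_of_pos (pow_pos hα0 _)]
      have hle : α ^ ((m ⟨k, hk⟩ : ℕ)) ≤ α ^ (n - 2) :=
        pow_le_pow_right₀ hα1.le (hmle ⟨k, hk⟩ (by simpa using by omega))
      rcases hp ⟨k, hk⟩ with h | h <;> rw [h] <;> simpa using hle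
    have hSabs : ∀ t : ℕ, t ≤ n - 1 → |S t| ≤ ((n : ℝ) - 1) * α ^ (n - 2) := by
      intro t ht
      have htr : (t : ℝ) ≤ (n : ℝ) - 1 := by
        rw [← hcastn1]; exact_mod_cast ht
      calc |S t| ≤ ∑ k ∈ Finset.range t, |f (k + 1)| := Finset.abs_sum_le_sum_abs _ _
        _ ≤ ∑ _k ∈ Finset.range t, α ^ (n - 2) := by
            refine Finset.sum_le_sum fun k hk => hfabs (k + 1) (by omega) ?_
            have := Finset.mem_range.mp hk; omega
        _ = t * α ^ (n - 2) := by
            rw [Finset.sum_const, Finset.card_range, nsmul_eq_mul]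
        _ ≤ ((n : ℝ) - 1) * α ^ (n - 2) := by nlinarith [hpow2pos]
    refine ⟨fun j => c + S (j : ℕ), ?_, ?_⟩
    · intro j
      obtain ⟨h1, h2⟩ := abs_le.mp (hSabs (n - 1) le_rfl)
      obtain ⟨h3, h4⟩ := abs_le.mp (hSabs (j : ℕ) (by omega))
      have hposmul : 0 < α ^ (n - 2) * (α - 3 * (n : ℝ) + 3) :=
        mul_pos hpow2pos (by linarith)
      simp only [hcdef]
      linarith
    · intro j
      by_cases hj : (j : ℕ) = 0
      · have hj0 : j = ⟨0, hn0⟩ := Fin.ext hj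
        rw [hj0, hpred0, hp0', hq0', hm0]
        have hS0 : S 0 = 0 := by simp [hSdef]
        simp only [mul_one]
        show c + S 0 + (c + S (n - 1)) = α ^ (n - 1)
        rw [hS0, hcdef]; ring
      · have hj1 : 1 ≤ (j : ℕ) := by omega
        rw [hqp j hj1, hpredpos j hj1]
        show (c + S (j : ℕ)) * p j + (c + S ((j : ℕ) - 1)) * (-p j) = α ^ ((m j : ℕ))
        have hstep : S (j : ℕ) = S ((j : ℕ) - 1) + f (j : ℕ) := by
          calc S (j : ℕ) = S (((j : ℕ) - 1) + 1) := by rw [Nat.sub_add_cancel hj1]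
            _ = S ((j : ℕ) - 1) + f ((((j : ℕ) - 1) + 1)) := Finset.sum_range_succ _ _
            _ = S ((j : ℕ) - 1) + f (j : ℕ) := by rw [Nat.sub_add_cancel hj1]
        have hpp : p j * p j = 1 := by rcases hp j with h | h <;> rw [h] <;> norm_num
        rw [hstep, hfval j]
        linear_combination α ^ ((m j : ℕ)) * hpp
end
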